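/- Let X be a Polish space and ε > 0. The set A_ε(X) of Borel probability measures μ on X such that μ({x}) ≥ ε for some point x is closed in the weak topology: if μₙ → μ₀ weakly and each μₙ has an atom of mass at least ε, then μ₀ has an atom of mass at least ε. -/

import Mathlib

open MeasureTheory Set Filter Topology Metric
open scoped ENNReal

/-!
By the converse half of Prokhorov's theorem, a weakly convergent sequence of probability measures
on a Polish space is tight: there is a compact `K` with `μₙ Kᶜ < ε` for every `n`. Every atom
`xₙ` of mass `ε` therefore lies in `K`, so the atoms have a cluster point `y`. Each closed ball
around `y` contains infinitely many `xₙ`, hence has `μₙ`-mass at least `ε` infinitely often, and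
by the portmanteau theorem `μ₀`-mass at least `ε`. Letting the radius shrink gives `μ₀ {y} ≥ ε`.
-/

namespace MeasureTheory

lemma isTightMeasureSet_range_of_tendsto {Ω : Type*} [MeasurableSpace Ω] [PseudoMetricSpace Ω]
    [OpensMeasurableSpace Ω] [SecondCountableTopology Ω] [CompleteSpace Ω]
    {μ : ProbabilityMeasure Ω} {μs : ℕ → ProbabilityMeasure Ω} (hμ : Tendsto μs atTop (𝓝 μ)) :
    IsTightMeasureSet (range fun n ↦ (μs n : Measure Ω)) := by
  have hcomp : IsCompact (closure (range μs)) :=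
    hμ.isCompact_insert_range.closure.of_isClosed_subset isClosed_closure
      (closure_mono (subset_insert _ _))
  convert isTightMeasureSet_of_isCompact_closure hcomp using 1
  ext ν
  simp

lemma le_measure_of_frequently_le_of_tendsto {Ω ι : Type*} [MeasurableSpace Ω]
    [TopologicalSpace Ω] [OpensMeasurableSpace Ω] [HasOuterApproxClosed Ω] {L : Filter ι}
    {μ : ProbabilityMeasure Ω} {μs : ι → ProbabilityMeasure Ω} (hμ : Tendsto μs L (𝓝 μ))
    {F : Set Ω} (hF : IsClosed F) {c : ℝ≥0∞} (hfreq : ∃ᶠ i in L, c ≤ (μs i : Measure Ω) F) :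
    c ≤ (μ : Measure Ω) F :=
  (le_limsup_of_frequently_le' hfreq).trans
    (ProbabilityMeasure.limsup_measure_closed_le_of_tendsto hμ hF)

lemma le_measure_singleton_of_forall_le_measure_closedBall {Ω : Type*} [MetricSpace Ω]
    [MeasurableSpace Ω] [OpensMeasurableSpace Ω] {μ : Measure Ω} [IsFiniteMeasure μ]
    {x : Ω} {c : ℝ≥0∞} (h : ∀ r > 0, c ≤ μ (closedBall x r)) : c ≤ μ {x} := by
  have hlim : Tendsto (fun r ↦ μ (cthickening r {x})) (𝓝[>] 0) (𝓝 (μ {x})) :=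
    (tendsto_measure_cthickening_of_isClosed ⟨1, one_pos, measure_ne_top μ _⟩
      isClosed_singleton).mono_left nhdsWithin_le_nhds
  refine ge_of_tendsto hlim (eventually_nhdsWithin_of_forall fun r (hr : 0 < r) ↦ ?_)
  rw [cthickening_singleton x hr.le]
  exact h r hr

lemma le_measure_singleton_of_mapClusterPt {Ω ι : Type*} [MetricSpace Ω] [MeasurableSpace Ω]
    [OpensMeasurableSpace Ω] {L : Filter ι} {μ : ProbabilityMeasure Ω}
    {μs : ι → ProbabilityMeasure Ω} (hμ : Tendsto μs L (𝓝 μ)) {c : ℝ≥0∞} {x : ι → Ω}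
    (hx : ∀ i, c ≤ (μs i : Measure Ω) {x i}) {y : Ω} (hy : MapClusterPt y L x) :
    c ≤ (μ : Measure Ω) {y} := by
  refine le_measure_singleton_of_forall_le_measure_closedBall fun r hr ↦ ?_
  refine le_measure_of_frequently_le_of_tendsto hμ isClosed_closedBall ?_
  exact (hy.frequently (closedBall_mem_nhds y hr)).mono fun i hi ↦
    (hx i).trans (measure_mono (singleton_subset_iff.2 hi))

end MeasureTheory

/-- On a Polish space, the set of probability measures with an atom of mass at least
`ε` is closed under weak limits. -/
theorem atom_ge_closed_under_weak_limits {X : Type*} [TopologicalSpace X] [PolishSpace X]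
    [MeasurableSpace X] [BorelSpace X]
    (ε : ℝ) (hε : 0 < ε)
    (μ : ℕ → ProbabilityMeasure X) (μ₀ : ProbabilityMeasure X)
    (hconv : Tendsto μ atTop (𝓝 μ₀))
    (hatom : ∀ n, ∃ x : X, ENNReal.ofReal ε ≤ (μ n).toMeasure {x}) :
    ∃ x : X, ENNReal.ofReal ε ≤ μ₀.toMeasure {x} := by
  let _ := TopologicalSpace.upgradeIsCompletelyMetrizable X
  choose x hx using hatom
  have hε0 : ENNReal.ofReal ε ≠ 0 := (ENNReal.ofReal_pos.2 hε).ne'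
  have hε' : ENNReal.ofReal ε / 2 < ENNReal.ofReal ε :=
    ENNReal.half_lt_self hε0 ENNReal.ofReal_ne_top
  obtain ⟨K, hK, hKμ⟩ := isTightMeasureSet_iff_exists_isCompact_measure_compl_le.1
    (isTightMeasureSet_range_of_tendsto hconv) _ (ENNReal.half_pos hε0)
  have hxK : ∀ n, x n ∈ K := fun n ↦ by
    by_contra hn
    have hle := (hx n).trans (measure_mono (singleton_subset_iff.2 (show x n ∈ Kᶜ from hn)))
    exact (hle.trans (hKμ _ ⟨n, rfl⟩)).not_gt hε'
  obtain ⟨y, -, hy⟩ := hK.exists_mapClusterPt (f := atTop) (tendsto_principal.2 (.of_forall hxK))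
  exact ⟨y, le_measure_singleton_of_mapClusterPt hconv hx hy⟩
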